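/- Let q ∈ ℂ with 0 < |q| < 1, let y, v ∈ ℂ be nonzero with y ∉ {q^k : k ∈ ℤ} and v ∉ {q^k : k ∈ ℤ}, and let m ∈ ℤ. Define F(u) = A(q,y,u) · A(q,y,v) · A(q,y,(uv)^{−1}) + A(q,y,u^{−1}) · A(q,y,v^{−1}) · A(q,y,uv). Then the residue of F at u = q^m vanishes: lim_{u → q^m} (u − q^m) · F(u) = 0. -/

import Mathlib

open Complex Filter Topology

/-- The Jacobi theta function θ₁(τ, z) = i·∑_{n∈ℤ} (−1)ⁿ e^{πiτ(n−1/2)²} e^{2πiz(n−1/2)}. -/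
noncomputable def theta1 (τ z : ℂ) : ℂ :=
  Complex.I * ∑' n : ℤ, (-1 : ℂ) ^ n *
    Complex.exp (Real.pi * Complex.I * τ * ((n : ℂ) - 1/2) ^ 2) *
    Complex.exp (2 * Real.pi * Complex.I * z * ((n : ℂ) - 1/2))

/-- The lattice ℤ + τℤ ⊂ ℂ. -/
def lattice (τ : ℂ) : Set ℂ := {w : ℂ | ∃ m n : ℤ, w = (m : ℂ) + (n : ℂ) * τ}

/-- A(q,y,u) = ∏_{n≥1} (1−yuq^{n−1})(1−(yu)⁻¹qⁿ) / ((1−uq^{n−1})(1−u⁻¹qⁿ)). -/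
noncomputable def A (q y u : ℂ) : ℂ :=
  ∏' n : ℕ, ((1 - y * u * q ^ n) * (1 - (y * u)⁻¹ * q ^ (n + 1))) /
    ((1 - u * q ^ n) * (1 - u⁻¹ * q ^ (n + 1)))

/-- B(q,y) = ∏_{n≥1} (1−yq^{n−1})(1−y⁻¹qⁿ) / (1−qⁿ)². -/
noncomputable def B (q y : ℂ) : ℂ :=
  ∏' n : ℕ, ((1 - y * q ^ n) * (1 - y⁻¹ * q ^ (n + 1))) / (1 - q ^ (n + 1)) ^ 2

/-- Equivariant elliptic genus of the toric CY 3-fold with fixed-point set `V`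
and weight vectors `w v j = (aʲᵥ, bʲᵥ)`. -/
noncomputable def Z {V : Type*} [Fintype V] (w : V → Fin 3 → ℤ × ℤ)
    (τ z t₁ t₂ : ℂ) : ℂ :=
  ∑ v : V, ∏ j : Fin 3,
    theta1 τ (z + ((w v j).1 : ℂ) * t₁ + ((w v j).2 : ℂ) * t₂) /
      theta1 τ (((w v j).1 : ℂ) * t₁ + ((w v j).2 : ℂ) * t₂)

/-!
Write `θ(x) = (x;q)_∞ (q/x;q)_∞`. Then `A(q,y,u) = θ(yu)/θ(u)` and `θ(qx) = -x⁻¹ θ(x)`, so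
`A(q,y,qu) = y⁻¹ A(q,y,u)`; in `F` the resulting powers of `y` cancel and `F(q^m u) = F(u)`.
The residue at `q^m` is therefore `q^m` times the residue at `1`. Since
`θ(u) = (1 - u) (qu;q)_∞ (q/u;q)_∞`, the residues of `A(q,y,u)` and `A(q,y,u⁻¹)` at `u = 1` are
`∓θ(y)/(q;q)_∞²`, so the two terms of `F` contribute the opposite amounts
`∓θ(y) A(q,y,v) A(q,y,v⁻¹)/(q;q)_∞²`.
-/

theorem tprod_div_eq_div {ι K : Type*} [Field K] [TopologicalSpace K] [ContinuousMul K]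
    [ContinuousInv₀ K] [T2Space K] {f g : ι → K} {a b : K}
    (hf : HasProd f a) (hg : HasProd g b) (hb : (∀ i, g i ≠ 0) → b ≠ 0) :
    ∏' i, f i / g i = a / b := by
  by_cases hg0 : ∀ i, g i ≠ 0
  · exact (hf.div₀ hg (hb hg0)).tprod_eq
  · obtain ⟨i, hi⟩ := not_forall_not.1 hg0
    rw [tprod_of_exists_eq_zero ⟨i, by simp [hi]⟩,
      hg.unique (hasProd_zero_of_exists_eq_zero ⟨i, hi⟩), div_zero]

noncomputable def qPochhammer (q x : ℂ) : ℂ := ∏' n : ℕ, (1 - x * q ^ n)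

section qPochhammer

variable {q : ℂ} (hq : ‖q‖ < 1)
include hq

theorem summable_norm_mul_pow (x : ℂ) : Summable fun n : ℕ => ‖x * q ^ n‖ := by
  simpa [norm_mul, norm_pow] using (summable_geometric_of_lt_one (norm_nonneg q) hq).mul_left ‖x‖

theorem multipliable_one_sub_mul_pow (x : ℂ) : Multipliable fun n : ℕ => 1 - x * q ^ n := by
  simpa [sub_eq_add_neg] using multipliable_one_add_of_summable (f := fun n : ℕ => -(x * q ^ n))
    (by simpa using summable_norm_mul_pow hq x)

theorem hasProd_qPochhammer (x : ℂ) : HasProd (fun n : ℕ => 1 - x * q ^ n) (qPochhammer q x) :=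
  (multipliable_one_sub_mul_pow hq x).hasProd

theorem qPochhammer_ne_zero {x : ℂ} (hx : ∀ n : ℕ, x * q ^ n ≠ 1) : qPochhammer q x ≠ 0 := by
  simpa [qPochhammer, sub_eq_add_neg] using tprod_one_add_ne_zero_of_summable
    (f := fun n : ℕ => -(x * q ^ n))
    (fun n => by rw [← sub_eq_add_neg, sub_ne_zero]; exact (hx n).symm)
    (by simpa using summable_norm_mul_pow hq x)

theorem qPochhammer_eq_one_sub_mul (x : ℂ) :
    qPochhammer q x = (1 - x) * qPochhammer q (q * x) := by
  have hshift : (fun n : ℕ => 1 - x * q ^ (n + 1)) = fun n => 1 - q * x * q ^ n := by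
    ext n; ring
  rw [qPochhammer, tprod_eq_zero_mul' (by rw [hshift]; exact multipliable_one_sub_mul_pow hq _),
    hshift, qPochhammer, pow_zero, mul_one]

theorem continuous_qPochhammer : Continuous (qPochhammer q) := by
  refine continuous_iff_continuousAt.2 fun x₀ => ?_
  set r := ‖x₀‖ + 1
  have hball : HasProdLocallyUniformlyOn (fun n x => 1 + -(x * q ^ n))
      (fun x => ∏' n : ℕ, (1 + -(x * q ^ n))) (Metric.ball 0 r) :=
    Summable.hasProdLocallyUniformlyOn_nat_one_add Metric.isOpen_ball
      ((summable_geometric_of_lt_one (norm_nonneg q) hq).mul_left r)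
      (.of_forall fun n x hx => by
        simpa [norm_mul] using mul_le_mul_of_nonneg_right (mem_ball_zero_iff.1 hx).le
          (norm_nonneg (q ^ n)))
      (fun n => by fun_prop)
  have hcont := TendstoLocallyUniformlyOn.continuousOn hball (.of_forall fun s => by fun_prop)
  simp only [← sub_eq_add_neg] at hcont
  exact hcont.continuousAt (Metric.isOpen_ball.mem_nhds (by simp [r]))

theorem qPochhammer_self_ne_zero : qPochhammer q q ≠ 0 := by
  refine qPochhammer_ne_zero hq fun n h => ?_
  have : ‖q‖ ^ (n + 1) < 1 := pow_lt_one₀ (norm_nonneg q) hq n.succ_ne_zero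
  rw [← norm_pow, pow_succ', h, norm_one] at this
  exact this.false

end qPochhammer

noncomputable def qTheta (q x : ℂ) : ℂ := qPochhammer q x * qPochhammer q (q / x)

section qTheta

variable {q : ℂ} (hq : ‖q‖ < 1)
include hq

theorem qTheta_eq_one_sub_mul (x : ℂ) :
    qTheta q x = (1 - x) * (qPochhammer q (q * x) * qPochhammer q (q / x)) := by
  rw [qTheta, qPochhammer_eq_one_sub_mul hq x, mul_assoc]

theorem qTheta_inv_eq_one_sub_mul (x : ℂ) :
    qTheta q x⁻¹ = (1 - x⁻¹) * (qPochhammer q (q * x) * qPochhammer q (q / x)) := by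
  rw [qTheta, qPochhammer_eq_one_sub_mul hq x⁻¹, div_inv_eq_mul, ← div_eq_mul_inv]
  ring

theorem qTheta_mul_left {x : ℂ} (hq0 : q ≠ 0) (hx : x ≠ 0) :
    qTheta q (q * x) = -x⁻¹ * qTheta q x := by
  rw [qTheta, div_mul_cancel_left₀ hq0, qPochhammer_eq_one_sub_mul hq x⁻¹, qTheta_eq_one_sub_mul hq,
    ← div_eq_mul_inv]
  field_simp
  ring

theorem hasProd_qTheta (x : ℂ) :
    HasProd (fun n : ℕ => (1 - x * q ^ n) * (1 - x⁻¹ * q ^ (n + 1))) (qTheta q x) := by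
  simpa [qTheta, pow_succ, div_eq_mul_inv, mul_comm, mul_left_comm, mul_assoc] using
    (hasProd_qPochhammer hq x).mul (hasProd_qPochhammer hq (q / x))

theorem continuousAt_qTheta {x : ℂ} (hx : x ≠ 0) : ContinuousAt (qTheta q) x :=
  (continuous_qPochhammer hq).continuousAt.mul
    ((continuous_qPochhammer hq).continuousAt.comp (continuousAt_const.div continuousAt_id hx))

theorem qTheta_ne_zero {x : ℂ} (hx : ∀ k : ℤ, x ≠ q ^ k) : qTheta q x ≠ 0 := by
  refine mul_ne_zero (qPochhammer_ne_zero hq fun n h => hx (-n) ?_)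
    (qPochhammer_ne_zero hq fun n h => hx (n + 1) ?_)
  · rw [zpow_neg, zpow_natCast]
    exact eq_inv_of_mul_eq_one_left h
  · have hx0 : x ≠ 0 := by rintro rfl; simp at h
    rw [← Nat.cast_succ, zpow_natCast, pow_succ']
    field_simp at h
    exact h.symm

end qTheta

section A

variable {q : ℂ} (hq : ‖q‖ < 1)
include hq

-- Valid for every `u`: where `θ(u) = 0`, some factor of `A` is `_ / 0 = 0`.
theorem A_eq_qTheta_div (y u : ℂ) : A q y u = qTheta q (y * u) / qTheta q u := by
  refine tprod_div_eq_div (hasProd_qTheta hq (y * u)) (hasProd_qTheta hq u) fun h => mul_ne_zero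
    (qPochhammer_ne_zero hq fun n hn => ?_) (qPochhammer_ne_zero hq fun n hn => ?_)
  · exact (mul_ne_zero_iff.1 (h n)).1 (by rw [hn, sub_self])
  · refine (mul_ne_zero_iff.1 (h n)).2 ?_
    rw [pow_succ', ← hn]; ring

theorem A_mul_left {y u : ℂ} (hq0 : q ≠ 0) (hy : y ≠ 0) (hu : u ≠ 0) :
    A q y (q * u) = y⁻¹ * A q y u := by
  rw [A_eq_qTheta_div hq, A_eq_qTheta_div hq, mul_left_comm, qTheta_mul_left hq hq0 hu,
    qTheta_mul_left hq hq0 (mul_ne_zero hy hu)]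
  by_cases h : qTheta q u = 0
  · simp [h]
  · field_simp

theorem A_zpow_mul {y u : ℂ} (hq0 : q ≠ 0) (hy : y ≠ 0) (hu : u ≠ 0) (k : ℤ) :
    A q y (q ^ k * u) = y ^ (-k) * A q y u := by
  induction k using Int.induction_on with
  | zero => simp
  | succ k ih =>
    rw [zpow_add_one₀ hq0, mul_comm _ q, mul_assoc,
      A_mul_left hq hq0 hy (mul_ne_zero (zpow_ne_zero k hq0) hu), ih, neg_add, zpow_add₀ hy,
      zpow_neg_one]
    ring
  | pred k ih =>
    have h := A_mul_left hq hq0 hy (mul_ne_zero (zpow_ne_zero (-k - 1) hq0) hu)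
    rw [← mul_assoc, ← zpow_one_add₀ hq0, show 1 + (-(k : ℤ) - 1) = -k by ring, ih,
      eq_inv_mul_iff_mul_eq₀ hy] at h
    rw [← h, show -(-(k : ℤ) - 1) = k + 1 by ring, zpow_add_one₀ hy, neg_neg]
    ring

theorem continuousAt_A {y x : ℂ} (hy : y ≠ 0) (hx0 : x ≠ 0) (hx : ∀ k : ℤ, x ≠ q ^ k) :
    ContinuousAt (A q y) x := by
  simp only [funext (A_eq_qTheta_div hq y)]
  exact ((continuousAt_qTheta hq (mul_ne_zero hy hx0)).comp
    (continuous_const_mul y).continuousAt).div (continuousAt_qTheta hq hx0) (qTheta_ne_zero hq hx)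

theorem tendsto_qPochhammer_mul_qPochhammer_div :
    Tendsto (fun w => qPochhammer q (q * w) * qPochhammer q (q / w)) (𝓝 1)
      (𝓝 (qPochhammer q q ^ 2)) := by
  have h : ContinuousAt (fun w => qPochhammer q (q * w) * qPochhammer q (q / w)) 1 :=
    ((continuous_qPochhammer hq).comp (continuous_const_mul q)).continuousAt.mul
      ((continuous_qPochhammer hq).continuousAt.comp
        (continuousAt_const.div continuousAt_id one_ne_zero))
  simpa [sq] using h.tendsto

theorem tendsto_sub_one_mul_A {y : ℂ} (hy : y ≠ 0) :
    Tendsto (fun w => (w - 1) * A q y w) (𝓝[≠] 1)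
      (𝓝 (-(qTheta q y / qPochhammer q q ^ 2))) := by
  have hlim : Tendsto
      (fun w => -(qTheta q (y * w) / (qPochhammer q (q * w) * qPochhammer q (q / w))))
      (𝓝 1) (𝓝 (-(qTheta q y / qPochhammer q q ^ 2))) := by
    have hθ : Tendsto (fun w => qTheta q (y * w)) (𝓝 1) (𝓝 (qTheta q y)) := by
      have hcont : ContinuousAt (fun w => qTheta q (y * w)) 1 :=
        (continuousAt_qTheta hq hy).comp_of_eq (continuous_const_mul y).continuousAt (mul_one y)
      simpa using hcont.tendsto
    exact (hθ.div (tendsto_qPochhammer_mul_qPochhammer_div hq)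
      (pow_ne_zero 2 (qPochhammer_self_ne_zero hq))).neg
  refine (hlim.mono_left nhdsWithin_le_nhds).congr' ?_
  filter_upwards [self_mem_nhdsWithin] with w (hw : w ≠ 1)
  rw [A_eq_qTheta_div hq, qTheta_eq_one_sub_mul hq w]
  have : 1 - w ≠ 0 := sub_ne_zero.2 hw.symm
  by_cases hR : qPochhammer q (q * w) * qPochhammer q (q / w) = 0
  · simp [hR]
  · field_simp
    ring

theorem tendsto_sub_one_mul_A_inv {y : ℂ} (hy : y ≠ 0) :
    Tendsto (fun w => (w - 1) * A q y w⁻¹) (𝓝[≠] 1)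
      (𝓝 (qTheta q y / qPochhammer q q ^ 2)) := by
  have hlim : Tendsto
      (fun w => w * qTheta q (y * w⁻¹) / (qPochhammer q (q * w) * qPochhammer q (q / w)))
      (𝓝 1) (𝓝 (qTheta q y / qPochhammer q q ^ 2)) := by
    have hθ : Tendsto (fun w => w * qTheta q (y * w⁻¹)) (𝓝 1) (𝓝 (qTheta q y)) := by
      have hinv : ContinuousAt (fun w : ℂ => y * w⁻¹) 1 :=
        continuousAt_const.mul (continuousAt_id.inv₀ one_ne_zero)
      have hcont : ContinuousAt (fun w => w * qTheta q (y * w⁻¹)) 1 :=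
        continuousAt_id.mul ((continuousAt_qTheta hq hy).comp_of_eq hinv (by simp))
      simpa using hcont.tendsto
    exact hθ.div (tendsto_qPochhammer_mul_qPochhammer_div hq)
      (pow_ne_zero 2 (qPochhammer_self_ne_zero hq))
  refine (hlim.mono_left nhdsWithin_le_nhds).congr' ?_
  filter_upwards [self_mem_nhdsWithin, nhdsWithin_le_nhds (eventually_ne_nhds one_ne_zero)]
    with w (hw : w ≠ 1) hw0
  rw [A_eq_qTheta_div hq, qTheta_inv_eq_one_sub_mul hq w]
  have : 1 - w ≠ 0 := sub_ne_zero.2 hw.symm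
  by_cases hR : qPochhammer q (q * w) * qPochhammer q (q / w) = 0
  · simp [hR]
  · field_simp

end A

noncomputable def conifoldGenus (q y v u : ℂ) : ℂ :=
  A q y u * A q y v * A q y (u * v)⁻¹ + A q y u⁻¹ * A q y v⁻¹ * A q y (u * v)

section conifoldGenus

variable {q y v : ℂ} (hq : ‖q‖ < 1) (hy : y ≠ 0) (hv : v ≠ 0)
include hq hy hv

theorem conifoldGenus_zpow_mul (hq0 : q ≠ 0) {u : ℂ} (hu : u ≠ 0) (k : ℤ) :
    conifoldGenus q y v (q ^ k * u) = conifoldGenus q y v u := by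
  have huv : u * v ≠ 0 := mul_ne_zero hu hv
  have hinv : (q ^ k * u)⁻¹ = q ^ (-k) * u⁻¹ := by rw [mul_inv, zpow_neg]
  have hinv' : (q ^ k * u * v)⁻¹ = q ^ (-k) * (u * v)⁻¹ := by rw [mul_assoc, mul_inv, zpow_neg]
  rw [conifoldGenus, conifoldGenus, hinv, hinv', mul_assoc (q ^ k) u v,
    A_zpow_mul hq hq0 hy hu, A_zpow_mul hq hq0 hy (inv_ne_zero hu),
    A_zpow_mul hq hq0 hy huv, A_zpow_mul hq hq0 hy (inv_ne_zero huv), neg_neg]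
  have hk : y ^ (-k) * y ^ k = 1 := by rw [zpow_neg, inv_mul_cancel₀ (zpow_ne_zero k hy)]
  linear_combination (A q y u * A q y v * A q y (u * v)⁻¹ +
    A q y u⁻¹ * A q y v⁻¹ * A q y (u * v)) * hk

theorem tendsto_sub_one_mul_conifoldGenus (hv' : ∀ k : ℤ, v ≠ q ^ k) :
    Tendsto (fun w => (w - 1) * conifoldGenus q y v w) (𝓝[≠] 1) (𝓝 0) := by
  have hvinv : ∀ k : ℤ, v⁻¹ ≠ q ^ k := fun k h => hv' (-k) (by rw [zpow_neg, ← h, inv_inv])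
  have hmul : ContinuousAt (fun w => w * v) 1 := continuousAt_id.mul continuousAt_const
  have hAinv : Tendsto (fun w => A q y (w * v)⁻¹) (𝓝[≠] 1) (𝓝 (A q y v⁻¹)) := by
    have : ContinuousAt (fun w => A q y (w * v)⁻¹) 1 :=
      (continuousAt_A hq hy (inv_ne_zero hv) hvinv).comp_of_eq (hmul.inv₀ (by simpa)) (by simp)
    simpa only [one_mul] using this.tendsto.mono_left nhdsWithin_le_nhds
  have hA : Tendsto (fun w => A q y (w * v)) (𝓝[≠] 1) (𝓝 (A q y v)) := by
    have : ContinuousAt (fun w => A q y (w * v)) 1 :=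
      (continuousAt_A hq hy hv hv').comp_of_eq hmul (one_mul v)
    simpa only [one_mul] using this.tendsto.mono_left nhdsWithin_le_nhds
  have hlim := (((tendsto_sub_one_mul_A hq hy).mul_const (A q y v)).mul hAinv).add
    (((tendsto_sub_one_mul_A_inv hq hy).mul_const (A q y v⁻¹)).mul hA)
  rw [show -(qTheta q y / qPochhammer q q ^ 2) * A q y v * A q y v⁻¹ +
    qTheta q y / qPochhammer q q ^ 2 * A q y v⁻¹ * A q y v = 0 by ring] at hlim
  refine hlim.congr fun w => ?_
  rw [conifoldGenus]
  ring

end conifoldGenus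

theorem residue_F_at_qm_vanishes_general (q y v : ℂ)
    (hq0 : 0 < ‖q‖) (hq1 : ‖q‖ < 1)
    (hy : y ≠ 0)
    (hv : v ≠ 0) (hv' : ∀ k : ℤ, v ≠ q ^ k) (m : ℤ) :
    Filter.Tendsto
      (fun u : ℂ => (u - q ^ m) *
        (A q y u * A q y v * A q y (u * v)⁻¹ +
          A q y u⁻¹ * A q y v⁻¹ * A q y (u * v)))
      (𝓝[≠] (q ^ m)) (𝓝 0) := by
  have hq : q ≠ 0 := norm_pos_iff.1 hq0
  have hqm : q ^ m ≠ 0 := zpow_ne_zero m hq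
  have hrescale : Tendsto (fun u => q ^ (-m) * u) (𝓝[≠] (q ^ m)) (𝓝[≠] 1) := by
    have := (Homeomorph.mulLeft₀ (q ^ (-m)) (zpow_ne_zero _ hq)).map_punctured_nhds_eq (q ^ m)
    simpa [hqm, Tendsto] using this.le
  have hlim := ((tendsto_sub_one_mul_conifoldGenus hq1 hy hv hv').comp hrescale).const_mul (q ^ m)
  rw [mul_zero] at hlim
  refine hlim.congr' ?_
  filter_upwards [nhdsWithin_le_nhds (eventually_ne_nhds hqm)] with u hu
  change q ^ m * ((q ^ (-m) * u - 1) * conifoldGenus q y v (q ^ (-m) * u)) = _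
  rw [conifoldGenus_zpow_mul hq1 hy hv hq hu, conifoldGenus, zpow_neg]
  field_simp

/-- The residue of F(u) = A(q,y,u)A(q,y,v)A(q,y,(uv)⁻¹) + A(q,y,u⁻¹)A(q,y,v⁻¹)A(q,y,uv)
at u = qᵐ vanishes. -/
theorem residue_F_at_qm_vanishes (q y v : ℂ)
    (hq0 : 0 < ‖q‖) (hq1 : ‖q‖ < 1)
    (hy : y ≠ 0) (hy' : ∀ k : ℤ, y ≠ q ^ k)
    (hv : v ≠ 0) (hv' : ∀ k : ℤ, v ≠ q ^ k) (m : ℤ) :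
    Filter.Tendsto
      (fun u : ℂ => (u - q ^ m) *
        (A q y u * A q y v * A q y (u * v)⁻¹ +
          A q y u⁻¹ * A q y v⁻¹ * A q y (u * v)))
      (𝓝[≠] (q ^ m)) (𝓝 0) :=
  residue_F_at_qm_vanishes_general q y v hq0 hq1 hy hv hv' m
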